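/- arXiv:2306.03855 — 6 statements merged into one kernel-verified Lean document; each statement's English description precedes it below -/
import Mathlib

section
/- Let λ = (n_1^{t_1} … n_k^{t_k}) be a partition of n and let f ∈ ℚ[x_1, …, x_n] be a symmetric polynomial. Then for all 1 ≤ i ≤ k, 1 ≤ j ≤ t_i and all m, m' ∈ I_{j,i}, one has T_λ(∂f/∂x_m) = T_λ(∂f/∂x_{m'}); consequently, for each m ∈ I_{j,i}, T_λ(∂f/∂x_m) = (1/n_i) · ∂(T_λ(f))/∂z_{j,i}. -/
open MvPolynomial

lemma pderiv_aeval_X_chain {σ τ : Type*} [Fintype σ] [DecidableEq σ] [DecidableEq τ]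
    (g : σ → τ) (z : τ) (f : MvPolynomial σ ℚ) :
    pderiv z (aeval (fun m => (X (g m) : MvPolynomial τ ℚ)) f) =
      ∑ m : σ, if g m = z then
        aeval (fun m' => (X (g m') : MvPolynomial τ ℚ)) (pderiv m f) else 0 := by
  induction f using MvPolynomial.induction_on with
  | C a => simp
  | add p q hp hq =>
    simp only [map_add, hp, hq, ← Finset.sum_add_distrib]
    refine Finset.sum_congr rfl fun m _ => ?_
    split_ifs <;> simp
  | mul_X p m hp =>
    simp only [map_mul, aeval_X, pderiv_mul, pderiv_X, map_add, hp]
    have hterm : ∀ x : σ,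
        (if g x = z then
          (aeval fun m' => (X (g m') : MvPolynomial τ ℚ)) ((pderiv x) p) * X (g m) +
            (aeval fun m' => (X (g m') : MvPolynomial τ ℚ)) p *
              (aeval fun m' => (X (g m') : MvPolynomial τ ℚ))
                ((Pi.single x 1 : σ → MvPolynomial σ ℚ) m)
          else 0)
        = (if g x = z then
            (aeval fun m' => (X (g m') : MvPolynomial τ ℚ)) ((pderiv x) p) else 0) * X (g m)
          + (if x = m then
              (if g x = z then (aeval fun m' => (X (g m') : MvPolynomial τ ℚ)) p else 0)
            else 0) := by
      intro x
      clear hp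
      simp only [Pi.single_apply]
      split_ifs <;> simp <;> simp_all
    simp only [hterm]
    rw [Finset.sum_add_distrib, ← Finset.sum_mul, Finset.sum_ite_eq' Finset.univ m]
    simp [Pi.single_apply, mul_ite]

lemma card_interval_fin (n a c : ℕ) (h : a + c ≤ n) :
    (Finset.univ.filter fun m : Fin n => a ≤ (m : ℕ) ∧ (m : ℕ) < a + c).card = c := by
  have hb : (Finset.univ.filter fun m : Fin n => a ≤ (m : ℕ) ∧ (m : ℕ) < a + c).card
      = (Finset.Ico a (a + c)).card := by
    refine Finset.card_bij (fun m _ => (m : ℕ)) ?_ ?_ ?_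
    · intro m hm
      simp only [Finset.mem_filter] at hm
      simp [Finset.mem_Ico, hm.2.1, hm.2.2]
    · intro a1 _ a2 _ hv
      exact Fin.val_injective hv
    · intro b hb
      simp only [Finset.mem_Ico] at hb
      exact ⟨⟨b, lt_of_lt_of_le hb.2 h⟩, by simp [hb.1, hb.2], rfl⟩
  rw [hb, Nat.card_Ico]
  omega

/-- `σ_{j,i} = Σ_{r<i} t_r n_r + j · n_i` (with `j` zero-based). -/
def sigmaShift {k : ℕ} (nn t : Fin k → ℕ) (i : Fin k) (j : ℕ) : ℕ :=
  (∑ r ∈ Finset.Iio i, t r * nn r) + j * nn i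

/-- The index set `I_{j,i}` (as zero-based indices of `Fin n`). -/
def Iset (n : ℕ) {k : ℕ} (nn t : Fin k → ℕ) (i : Fin k) (j : ℕ) : Finset (Fin n) :=
  Finset.univ.filter fun m =>
    sigmaShift nn t i j ≤ (m : ℕ) ∧ (m : ℕ) < sigmaShift nn t i j + nn i

/-- if `f` is a symmetric polynomial, then for `m, m' ∈ I_{j,i}` one has
`T_λ(∂f/∂x_m) = T_λ(∂f/∂x_{m'})`, and for `m ∈ I_{j,i}`,
`T_λ(∂f/∂x_m) = (1/n_i) · ∂(T_λ f)/∂z_{j,i}`. -/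
theorem Tlambda_pderiv_symmetric
    (n k : ℕ) (nn t : Fin k → ℕ)
    (hmono : StrictMono nn) (hnpos : ∀ i, 0 < nn i) (htpos : ∀ i, 0 < t i)
    (hsum : ∑ i, t i * nn i = n)
    (idx : Fin n → (i : Fin k) × Fin (t i))
    (hidx : ∀ (m : Fin n) (i : Fin k) (j : Fin (t i)),
      idx m = ⟨i, j⟩ ↔ m ∈ Iset n nn t i (j : ℕ))
    (f : MvPolynomial (Fin n) ℚ)
    (hf : ∀ σ : Equiv.Perm (Fin n), rename σ f = f)
    (i : Fin k) (j : Fin (t i)) :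
    (∀ m ∈ Iset n nn t i (j : ℕ), ∀ m' ∈ Iset n nn t i (j : ℕ),
      aeval (fun m'' : Fin n => (X (idx m'') : MvPolynomial ((i : Fin k) × Fin (t i)) ℚ))
          (pderiv m f) =
        aeval (fun m'' : Fin n => (X (idx m'') : MvPolynomial ((i : Fin k) × Fin (t i)) ℚ))
          (pderiv m' f)) ∧
    (∀ m ∈ Iset n nn t i (j : ℕ),
      aeval (fun m'' : Fin n => (X (idx m'') : MvPolynomial ((i : Fin k) × Fin (t i)) ℚ))
          (pderiv m f) =
        C ((nn i : ℚ)⁻¹) *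
          pderiv (⟨i, j⟩ : (i : Fin k) × Fin (t i))
            (aeval (fun m'' : Fin n => X (idx m'')) f)) := by
  classical
  have key : ∀ m ∈ Iset n nn t i (j : ℕ), ∀ m' ∈ Iset n nn t i (j : ℕ),
      aeval (fun m'' : Fin n => (X (idx m'') : MvPolynomial ((i : Fin k) × Fin (t i)) ℚ))
          (pderiv m f) =
        aeval (fun m'' : Fin n => (X (idx m'') : MvPolynomial ((i : Fin k) × Fin (t i)) ℚ))
          (pderiv m' f) := by
    intro m hm m' hm'
    have h1 : idx m = ⟨i, j⟩ := (hidx m i j).2 hm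
    have h2 : idx m' = ⟨i, j⟩ := (hidx m' i j).2 hm'
    have hswap : rename (⇑(Equiv.swap m m')) f = f := hf _
    have hpd := pderiv_rename (Equiv.injective (Equiv.swap m m')) m' f
    rw [Equiv.swap_apply_right, hswap] at hpd
    have hfun : ((fun m'' : Fin n =>
        (X (idx m'') : MvPolynomial ((i : Fin k) × Fin (t i)) ℚ)) ∘ ⇑(Equiv.swap m m'))
        = fun m'' : Fin n => X (idx m'') := by
      funext x
      simp only [Function.comp_apply]
      rcases eq_or_ne x m with rfl | hxm
      · rw [Equiv.swap_apply_left, h1, h2]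
      · rcases eq_or_ne x m' with rfl | hxm'
        · rw [Equiv.swap_apply_right, h1, h2]
        · rw [Equiv.swap_apply_of_ne_of_ne hxm hxm']
    rw [hpd, aeval_rename, hfun]
  refine ⟨key, ?_⟩
  intro m hm
  have hcard : (Iset n nn t i (j : ℕ)).card = nn i := by
    have h1 : (j : ℕ) * nn i + nn i ≤ t i * nn i := by
      have hj : (j : ℕ) + 1 ≤ t i := j.isLt
      calc (j : ℕ) * nn i + nn i = ((j : ℕ) + 1) * nn i := by ring
        _ ≤ t i * nn i := Nat.mul_le_mul_right _ hj
    have h2 : (∑ r ∈ Finset.Iio i, t r * nn r) + t i * nn i ≤ n := by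
      rw [← hsum]
      have he : (∑ r ∈ Finset.Iio i, t r * nn r) + t i * nn i
          = ∑ r ∈ insert i (Finset.Iio i), t r * nn r := by
        rw [Finset.sum_insert (by simp)]; ring
      rw [he]
      exact Finset.sum_le_sum_of_subset (Finset.subset_univ _)
    have hle : sigmaShift nn t i (j : ℕ) + nn i ≤ n := by
      unfold sigmaShift; omega
    exact card_interval_fin n _ _ hle
  have hfilter : (Finset.univ.filter
      fun m'' : Fin n => idx m'' = (⟨i, j⟩ : (i : Fin k) × Fin (t i)))
      = Iset n nn t i (j : ℕ) := by
    ext x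
    simp only [Finset.mem_filter, Finset.mem_univ, true_and]
    rw [hidx x i j]
  rw [pderiv_aeval_X_chain idx (⟨i, j⟩ : (i : Fin k) × Fin (t i)) f,
    ← Finset.sum_filter, hfilter,
    Finset.sum_congr rfl (fun x hx => key x hx m hm), Finset.sum_const, hcard,
    nsmul_eq_mul]
  have hC : ((nn i : ℕ) : MvPolynomial ((i : Fin k) × Fin (t i)) ℚ) = C ((nn i : ℕ) : ℚ) := by
    simp
  rw [hC, ← mul_assoc, ← C_mul, inv_mul_cancel₀ (Nat.cast_ne_zero.2 (hnpos i).ne'), C_1, one_mul]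
end

section
/- Let f = (f_1, …, f_s) be symmetric polynomials in ℚ[x_1, …, x_n] and let λ = (n_1^{t_1} … n_k^{t_k}) be a partition of n with length ℓ = t_1 + ⋯ + t_k. Then T_λ(Jac_{x_1,…,x_n}(f)) = Jac_{z_{1,1},…,z_{t_k,k}}(T_λ(f)) · Z, where T_λ is applied entrywise to the s×n Jacobian matrix of f, Jac(T_λ(f)) is the s×ℓ Jacobian matrix of T_λ(f) with respect to the variables z_{j,i}, and Z ∈ ℚ^{ℓ×n} is the matrix whose entry in row (j,i) and column m equals 1/n_i if m ∈ I_{j,i} and 0 otherwise. -/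
/-!
Write `T_λ = rename idx`, where `idx m = (i, j)` for `m ∈ I_{j,i}`. By the chain rule,
`∂ T_λ(f) / ∂ z_v` is the sum of `T_λ(∂ f / ∂ x_m)` over the fibre `idx⁻¹ v = I_{j,i}`. When `f` is
symmetric, the transposition of two variables in the same fibre fixes `f` and is invisible to
`T_λ`, so all these summands coincide: `∂ T_λ(f) / ∂ z_v = n_i · T_λ(∂ f / ∂ x_m)` for every
`m ∈ I_{j,i}`, which is the factorization after dividing by `n_i`.
-/

open MvPolynomial

open Finset

theorem Derivation.map_mvPolynomial_aeval {R σ S M : Type*} [CommSemiring R] [Fintype σ]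
    [CommSemiring S] [Algebra R S] [AddCommMonoid M] [Module R M] [Module S M]
    [IsScalarTower R S M] (D : Derivation R S M) (g : σ → S) (p : MvPolynomial σ R) :
    D (aeval g p) = ∑ m, aeval g (pderiv m p) • D (g m) := by
  classical
  induction p using MvPolynomial.induction_on with
  | C a => simp [D.map_algebraMap]
  | add p q hp hq => simp only [map_add, hp, hq, add_smul, sum_add_distrib]
  | mul_X p j hp =>
    simp only [map_mul, aeval_X, D.leibniz, hp, pderiv_mul, pderiv_X, map_add, add_smul,
      sum_add_distrib, smul_sum, mul_smul, Pi.single_apply, apply_ite (aeval g), map_zero,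
      mul_ite, mul_one, mul_zero, ite_smul, zero_smul, sum_ite_eq, mem_univ, if_true]
    rw [add_comm]
    exact congrArg (· + _) (sum_congr rfl fun m _ => smul_comm _ _ _)

namespace MvPolynomial

variable {R σ τ : Type*} [CommSemiring R]

theorem pderiv_rename_eq_sum [Fintype σ] [DecidableEq τ] (f : σ → τ) (p : MvPolynomial σ R)
    (v : τ) : pderiv v (rename f p) = ∑ m with f m = v, rename f (pderiv m p) := by
  rw [rename_eq_aeval, (pderiv v).map_mvPolynomial_aeval, sum_filter]
  refine sum_congr rfl fun m _ => ?_
  rw [Function.comp_apply, pderiv_X, Pi.single_apply, eq_comm, smul_ite, smul_eq_mul, mul_one,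
    smul_zero]

theorem IsSymmetric.rename_pderiv_eq [DecidableEq σ] {p : MvPolynomial σ R}
    (hp : p.IsSymmetric) (f : σ → τ) {m m' : σ} (h : f m = f m') :
    rename f (pderiv m' p) = rename f (pderiv m p) := by
  have hswap := pderiv_rename (Equiv.swap m m').injective m p
  rw [hp, Equiv.swap_apply_left] at hswap
  have hf : f ∘ Equiv.swap m m' = f := by
    funext x
    rw [Function.comp_apply, Equiv.swap_apply_def]
    split_ifs <;> simp_all
  rw [hswap, rename_rename, hf]

theorem IsSymmetric.pderiv_rename_apply [Fintype σ] [DecidableEq σ] [DecidableEq τ]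
    {p : MvPolynomial σ R} (hp : p.IsSymmetric) (f : σ → τ) (m : σ) :
    pderiv (f m) (rename f p) = #{m' | f m' = f m} • rename f (pderiv m p) := by
  rw [pderiv_rename_eq_sum, ← sum_const]
  exact sum_congr rfl fun m' hm' => hp.rename_pderiv_eq f (mem_filter.1 hm').2.symm

noncomputable def jacobian {ι : Type*} (f : ι → MvPolynomial σ R) : Matrix ι σ (MvPolynomial σ R) :=
  Matrix.of fun a m => pderiv m (f a)

noncomputable def fiberMeanMatrix (K : Type*) [Field K] [Fintype σ] [DecidableEq τ] (g : σ → τ) :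
    Matrix τ σ (MvPolynomial τ K) :=
  Matrix.of fun v m => if g m = v then C ((#{m' | g m' = v} : K)⁻¹) else 0

theorem map_rename_jacobian_of_isSymmetric {K ι : Type*} [Field K] [CharZero K] [Fintype σ]
    [DecidableEq σ] [Fintype τ] [DecidableEq τ] {f : ι → MvPolynomial σ K}
    (hf : ∀ a, (f a).IsSymmetric) (g : σ → τ) :
    (jacobian f).map (rename g) = jacobian (fun a => rename g (f a)) * fiberMeanMatrix K g := by
  refine Matrix.ext fun a m => ?_
  have hcard : (#{m' | g m' = g m} : K) ≠ 0 := by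
    rw [Nat.cast_ne_zero, ← pos_iff_ne_zero, card_pos]
    exact ⟨m, by simp⟩
  simp only [jacobian, fiberMeanMatrix, Matrix.map_apply, Matrix.mul_apply, Matrix.of_apply]
  rw [sum_eq_single (g m) (fun v _ hv => by simp [Ne.symm hv]) (by simp), if_pos rfl,
    (hf a).pderiv_rename_apply, nsmul_eq_mul, ← map_natCast C, mul_comm, ← mul_assoc, ← C_mul, inv_mul_cancel₀ hcard,
    C_1, one_mul]

end MvPolynomial

theorem card_Iset {n k : ℕ} (nn t : Fin k → ℕ) {i : Fin k} {j : ℕ} (hj : j < t i)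
    (hsum : ∑ i, t i * nn i ≤ n) : #(Iset n nn t i j) = nn i := by
  have hle : sigmaShift nn t i j + nn i ≤ n := by
    have hprefix : ∑ r ∈ insert i (Iio i), t r * nn r ≤ n :=
      (sum_le_sum_of_subset (subset_univ _)).trans hsum
    rw [sum_insert (by simp)] at hprefix
    have : (j + 1) * nn i ≤ t i * nn i := Nat.mul_le_mul_right _ hj
    unfold sigmaShift
    linarith
  have : Iset n nn t i j = (Ico (sigmaShift nn t i j) (sigmaShift nn t i j + nn i)).attachFin
      (fun m hm => (mem_Ico.1 hm).2.trans_le hle) := by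
    ext m
    simp [Iset]
  rw [this, card_attachFin, Nat.card_Ico, Nat.add_sub_cancel_left]

theorem Tlambda_jacobian_factorization_general
    (n k s : ℕ) (nn t : Fin k → ℕ)
    (hsum : ∑ i, t i * nn i = n)
    (idx : Fin n → (i : Fin k) × Fin (t i))
    (hidx : ∀ (m : Fin n) (i : Fin k) (j : Fin (t i)),
      idx m = ⟨i, j⟩ ↔ m ∈ Iset n nn t i (j : ℕ))
    (f : Fin s → MvPolynomial (Fin n) ℚ)
    (hf : ∀ a, ∀ σ : Equiv.Perm (Fin n), rename σ (f a) = f a) :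
    (Matrix.of fun (a : Fin s) (m : Fin n) =>
        aeval (fun m' : Fin n => (X (idx m') : MvPolynomial ((i : Fin k) × Fin (t i)) ℚ))
          (pderiv m (f a)))
      = (Matrix.of fun (a : Fin s) (v : (i : Fin k) × Fin (t i)) =>
          pderiv v (aeval (fun m' : Fin n => X (idx m')) (f a))) *
        (Matrix.of fun (v : (i : Fin k) × Fin (t i)) (m : Fin n) =>
          if m ∈ Iset n nn t v.1 (v.2 : ℕ)
          then (C ((nn v.1 : ℚ)⁻¹) : MvPolynomial ((i : Fin k) × Fin (t i)) ℚ)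
          else 0) := by
  have hmem : ∀ m v, m ∈ Iset n nn t v.1 v.2 ↔ idx m = v := fun m v => (hidx m v.1 v.2).symm
  have hfiber : ∀ v, #{m | idx m = v} = nn v.1 := fun v => by
    rw [← card_Iset nn t v.2.isLt hsum.le]
    congr 1
    ext m
    simp [hmem]
  have key := map_rename_jacobian_of_isSymmetric hf idx
  simp only [jacobian, fiberMeanMatrix, hfiber] at key
  simp only [← hmem, rename_eq_aeval] at key
  exact key

/-- for symmetric polynomials `f = (f_1,…,f_s)` and a partition `λ` of `n`,
`T_λ(Jac_x(f)) = Jac_z(T_λ(f)) · Z`, where `Z` has entry `1/n_i` in row `(j,i)` and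
column `m` when `m ∈ I_{j,i}`, and `0` otherwise. -/
theorem Tlambda_jacobian_factorization
    (n k s : ℕ) (nn t : Fin k → ℕ)
    (hmono : StrictMono nn) (hnpos : ∀ i, 0 < nn i) (htpos : ∀ i, 0 < t i)
    (hsum : ∑ i, t i * nn i = n)
    (idx : Fin n → (i : Fin k) × Fin (t i))
    (hidx : ∀ (m : Fin n) (i : Fin k) (j : Fin (t i)),
      idx m = ⟨i, j⟩ ↔ m ∈ Iset n nn t i (j : ℕ))
    (f : Fin s → MvPolynomial (Fin n) ℚ)
    (hf : ∀ a, ∀ σ : Equiv.Perm (Fin n), rename σ (f a) = f a) :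
    (Matrix.of fun (a : Fin s) (m : Fin n) =>
        aeval (fun m' : Fin n => (X (idx m') : MvPolynomial ((i : Fin k) × Fin (t i)) ℚ))
          (pderiv m (f a)))
      = (Matrix.of fun (a : Fin s) (v : (i : Fin k) × Fin (t i)) =>
          pderiv v (aeval (fun m' : Fin n => X (idx m')) (f a))) *
        (Matrix.of fun (v : (i : Fin k) × Fin (t i)) (m : Fin n) =>
          if m ∈ Iset n nn t v.1 (v.2 : ℕ)
          then (C ((nn v.1 : ℚ)⁻¹) : MvPolynomial ((i : Fin k) × Fin (t i)) ℚ)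
          else 0) :=
  Tlambda_jacobian_factorization_general n k s nn t hsum idx hidx f hf
end

section
/- Let f = (f_1, …, f_s) be symmetric polynomials in ℚ[x_1, …, x_n] and let λ be a partition of n of length ℓ. If the Jacobian matrix of f has rank s at every point of the complex zero set V(f) ⊂ ℂ^n, then the Jacobian matrix of T_λ(f) with respect to the ℓ variables z_{j,i} has rank s at every point of the complex zero set V(T_λ(f)) ⊂ ℂ^ℓ. -/
/-!
`T_λ` is the substitution `x_m ↦ z_{idx m}`, and `w ∘ idx` lies on `V(f)` whenever `w` lies on
`V(T_λ(f))`. By the chain rule each column of the Jacobian of `T_λ(f)` at `w` is the sum of the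
columns of the Jacobian of `f` at `w ∘ idx` over a fibre of `idx`. Symmetry of `f` makes the
latter Jacobian constant along each fibre, since swapping two variables on which `w ∘ idx`
agrees fixes both `f` and the point. So every column of the Jacobian of `f` is a rescaled column
of that of `T_λ(f)`, whose rank is therefore at least `s`.
-/

open MvPolynomial

namespace MvPolynomial

variable {R σ τ : Type*} [CommSemiring R]

theorem pderiv_rename_eq_sum_fiber [Fintype σ] [DecidableEq σ] [DecidableEq τ]
    (φ : σ → τ) (v : τ) (p : MvPolynomial σ R) :
    pderiv v (rename φ p) = ∑ m with φ m = v, rename φ (pderiv m p) := by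
  induction p using MvPolynomial.induction_on with
  | C a => simp
  | add p q hp hq => simp [hp, hq, Finset.sum_add_distrib]
  | mul_X p m h =>
    simp only [map_mul, rename_X, pderiv_mul, h, pderiv_X, Pi.single_apply, map_add,
      Finset.sum_add_distrib, mul_ite, mul_one, mul_zero, apply_ite (rename φ), map_zero,
      Finset.sum_mul]
    split_ifs <;> simp_all

theorem IsSymmetric.aeval_pderiv_eq [DecidableEq σ] {S : Type*} [CommSemiring S] [Algebra R S]
    {p : MvPolynomial σ R} (hp : p.IsSymmetric) {w : σ → S} {m m' : σ} (hw : w m = w m') :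
    aeval w (pderiv m p) = aeval w (pderiv m' p) := by
  have hw_swap : w ∘ Equiv.swap m m' = w := by
    funext x
    simp only [Function.comp_apply, Equiv.swap_apply_def]
    split_ifs <;> simp_all
  have h := pderiv_rename (Equiv.swap m m').injective m p
  rw [hp, Equiv.swap_apply_left] at h
  rw [h, aeval_rename, hw_swap]

end MvPolynomial

namespace Matrix

theorem rank_le_rank_of_eq_sum_fiber {K ι α β : Type*} [Field K] [CharZero K]
    [Fintype α] [Fintype β] [DecidableEq β]
    (A : Matrix ι α K) (B : Matrix ι β K) (φ : α → β)
    (hA : ∀ i m m', φ m = φ m' → A i m = A i m')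
    (hB : ∀ i v, B i v = ∑ m with φ m = v, A i m) :
    A.rank ≤ B.rank := by
  classical
  have hfactor : A = B.submatrix id φ *
      diagonal fun m => ((Finset.univ.filter fun m' => φ m' = φ m).card : K)⁻¹ := by
    ext i m
    have hcard : ((Finset.univ.filter fun m' => φ m' = φ m).card : K) ≠ 0 :=
      Nat.cast_ne_zero.mpr (Finset.card_ne_zero.mpr ⟨m, by simp⟩)
    rw [mul_diagonal, submatrix_apply, id, hB,
      Finset.sum_congr rfl fun m' hm' => hA i m' m (Finset.mem_filter.mp hm').2,
      Finset.sum_const, nsmul_eq_mul, mul_right_comm, mul_inv_cancel₀ hcard, one_mul]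
  rw [hfactor]
  exact (rank_mul_le_left _ _).trans (rank_submatrix_le _ _ _)

end Matrix

theorem Tlambda_preserves_conditionA_general
    (n k s : ℕ) (t : Fin k → ℕ)
    (idx : Fin n → (i : Fin k) × Fin (t i))
    (f : Fin s → MvPolynomial (Fin n) ℚ)
    (hf : ∀ a, ∀ σ : Equiv.Perm (Fin n), rename σ (f a) = f a)
    (hA : ∀ w : Fin n → ℂ, (∀ a, aeval w (f a) = 0) →
      (Matrix.of fun (a : Fin s) (m : Fin n) => aeval w (pderiv m (f a))).rank = s) :
    ∀ w : ((i : Fin k) × Fin (t i)) → ℂ,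
      (∀ a, aeval w (aeval (fun m : Fin n =>
          (X (idx m) : MvPolynomial ((i : Fin k) × Fin (t i)) ℚ)) (f a)) = 0) →
      (Matrix.of fun (a : Fin s) (v : (i : Fin k) × Fin (t i)) =>
        aeval w (pderiv v (aeval (fun m : Fin n =>
          (X (idx m) : MvPolynomial ((i : Fin k) × Fin (t i)) ℚ)) (f a)))).rank = s := by
  classical
  intro w hw
  have hT : ∀ p : MvPolynomial (Fin n) ℚ,
      aeval (fun m => (X (idx m) : MvPolynomial ((i : Fin k) × Fin (t i)) ℚ)) p =
        rename idx p := fun p => by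
    rw [rename_eq_aeval]; rfl
  simp only [hT, aeval_rename] at hw ⊢
  refine le_antisymm ((Matrix.rank_le_card_height _).trans (by simp)) ?_
  refine (hA (w ∘ idx) hw).symm.le.trans <| Matrix.rank_le_rank_of_eq_sum_fiber _ _ idx
    (fun a m m' h => IsSymmetric.aeval_pderiv_eq (hf a) (congrArg w h)) fun a v => ?_
  simp only [Matrix.of_apply, pderiv_rename_eq_sum_fiber, map_sum, aeval_rename]

/-- if the Jacobian of the symmetric system `f` has rank `s` at every
complex zero of `f`, then the Jacobian of the sliced system `T_λ(f)` has rank `s` at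
every complex zero of `T_λ(f)`. -/
theorem Tlambda_preserves_conditionA
    (n k s : ℕ) (nn t : Fin k → ℕ)
    (hmono : StrictMono nn) (hnpos : ∀ i, 0 < nn i) (htpos : ∀ i, 0 < t i)
    (hsum : ∑ i, t i * nn i = n)
    (idx : Fin n → (i : Fin k) × Fin (t i))
    (hidx : ∀ (m : Fin n) (i : Fin k) (j : Fin (t i)),
      idx m = ⟨i, j⟩ ↔ m ∈ Iset n nn t i (j : ℕ))
    (f : Fin s → MvPolynomial (Fin n) ℚ)
    (hf : ∀ a, ∀ σ : Equiv.Perm (Fin n), rename σ (f a) = f a)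
    (hA : ∀ w : Fin n → ℂ, (∀ a, aeval w (f a) = 0) →
      (Matrix.of fun (a : Fin s) (m : Fin n) => aeval w (pderiv m (f a))).rank = s) :
    ∀ w : ((i : Fin k) × Fin (t i)) → ℂ,
      (∀ a, aeval w (aeval (fun m : Fin n =>
          (X (idx m) : MvPolynomial ((i : Fin k) × Fin (t i)) ℚ)) (f a)) = 0) →
      (Matrix.of fun (a : Fin s) (v : (i : Fin k) × Fin (t i)) =>
        aeval w (pderiv v (aeval (fun m : Fin n =>
          (X (idx m) : MvPolynomial ((i : Fin k) × Fin (t i)) ℚ)) (f a)))).rank = s :=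
  Tlambda_preserves_conditionA_general n k s t idx f hf hA
end

section
/- Let g = (g_1, …, g_s) ⊂ ℚ[z_1, …, z_k] be invariant under S_{t_1} × ⋯ × S_{t_k} and satisfy condition (A), i.e. the Jacobian matrix of g has rank s at every point of V(g) ⊂ ℂ^ℓ where ℓ = t_1 + ⋯ + t_k. For each i let h_i ∈ ℚ[p_{1,1}, …, p_{t_k,k}] be the unique polynomial with g_i = h_i(P_{1,1}, …, P_{t_k,k}), where P_{j,i} is the j-th Newton power sum in the block z_i. Then the sequence (h_1, …, h_s) also satisfies condition (A): its Jacobian matrix with respect to the ℓ variables p_{j,i} has rank s at every point of V(h_1, …, h_s) ⊂ ℂ^ℓ. -/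
/-!
Over `ℂ` the power-sum map `z ↦ (P_1(z), …, P_t(z))` of each block is surjective: Newton's
identities turn prescribed power sums into prescribed elementary symmetric functions, and these
are realised by the roots of a polynomial. Hence every zero `w` of `h` is the image of a zero `z`
of `g = h ∘ P`, and by the chain rule `Jac g (z) = Jac h (w) * Jac P (z)`. The product has rank
`s`, so the `s`-rowed factor `Jac h (w)` has rank `s` as well.
-/

open MvPolynomial Finset

theorem Multiset.exists_fin_map_eq {α : Type*} (s : Multiset α) {n : ℕ} (hn : card s = n) :
    ∃ f : Fin n → α, univ.val.map f = s := by
  subst hn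
  obtain ⟨l, rfl⟩ : ∃ l : List α, (l : Multiset α) = s := Quotient.exists_rep s
  rw [Multiset.coe_card]
  exact ⟨l.get, by simp⟩

section Newton

variable {R : Type*} [CommRing R]

/-- Newton's identities read `n * e n = (-1) ^ (n + 1) * newtonSum e p n` for the elementary
symmetric functions `e` and the power sums `p`. -/
def newtonSum (e p : ℕ → R) (n : ℕ) : R := ∑ i ∈ range n, (-1) ^ i * e i * p (n - i)

theorem newtonSum_congr_left {e e' : ℕ → R} (p : ℕ → R) {n : ℕ} (h : ∀ i < n, e i = e' i) :
    newtonSum e p n = newtonSum e' p n :=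
  sum_congr rfl fun i hi => by rw [h i (mem_range.mp hi)]

theorem natCast_mul_eval_esymm {σ : Type*} [Fintype σ] (z : σ → R) (n : ℕ) :
    (n : R) * eval z (esymm σ R n) = (-1) ^ (n + 1) *
      newtonSum (fun i => eval z (esymm σ R i)) (fun i => eval z (psum σ R i)) n := by
  have h := congrArg (eval z) (mul_esymm_eq_sum σ R n)
  simp only [map_mul, map_natCast, map_pow, map_neg, map_one, map_sum] at h
  rw [h, sum_filter, Nat.sum_antidiagonal_eq_sum_range_succ_mk, sum_range_succ,
    if_neg (lt_irrefl n), add_zero, newtonSum]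
  exact congrArg _ (sum_congr rfl fun i hi => if_pos (mem_range.mp hi))

theorem eq_of_newton_relation {e p p' : ℕ → R} (he : e 0 = 1) {t : ℕ}
    (hp : ∀ n, 0 < n → n ≤ t → (n : R) * e n = (-1) ^ (n + 1) * newtonSum e p n)
    (hp' : ∀ n, 0 < n → n ≤ t → (n : R) * e n = (-1) ^ (n + 1) * newtonSum e p' n) :
    ∀ n, 0 < n → n ≤ t → p n = p' n := by
  intro n
  induction n using Nat.strong_induction_on with
  | _ n ih =>
    intro hn hnt
    obtain ⟨m, rfl⟩ : ∃ m, n = m + 1 := ⟨n - 1, by omega⟩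
    have hsum : newtonSum e p (m + 1) = newtonSum e p' (m + 1) :=
      (isUnit_neg_one.pow _).mul_left_cancel ((hp _ hn hnt).symm.trans (hp' _ hn hnt))
    rw [newtonSum, newtonSum, sum_range_succ', sum_range_succ'] at hsum
    have hlower : ∑ i ∈ range m, (-1) ^ (i + 1) * e (i + 1) * p (m + 1 - (i + 1)) =
        ∑ i ∈ range m, (-1) ^ (i + 1) * e (i + 1) * p' (m + 1 - (i + 1)) :=
      sum_congr rfl fun i hi => by
        have := mem_range.mp hi
        rw [ih (m + 1 - (i + 1)) (by omega) (by omega) (by omega)]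
    rw [hlower] at hsum
    simpa [he] using add_left_cancel hsum

end Newton

section NewtonESymm

variable {K : Type*} [Field K]

/-- The elementary symmetric functions that Newton's identities determine from the power sums
`p` (the values `p 0` are never used). -/
noncomputable def newtonESymm (p : ℕ → K) : ℕ → K
  | 0 => 1
  | n + 1 => (-1) ^ (n + 2) / (n + 1) *
      ∑ i : Fin (n + 1), (-1) ^ (i : ℕ) * newtonESymm p i * p (n + 1 - i)

theorem newtonESymm_zero (p : ℕ → K) : newtonESymm p 0 = 1 := by
  rw [newtonESymm]

theorem natCast_mul_newtonESymm [CharZero K] (p : ℕ → K) (n : ℕ) :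
    (n : K) * newtonESymm p n = (-1) ^ (n + 1) * newtonSum (newtonESymm p) p n := by
  cases n with
  | zero => simp [newtonSum]
  | succ n =>
    rw [newtonESymm, newtonSum, ← Fin.sum_univ_eq_sum_range
      (fun i => (-1) ^ i * newtonESymm p i * p (n + 1 - i))]
    field_simp
    push_cast
    ring

end NewtonESymm

theorem IsAlgClosed.exists_esymm_eq {K : Type*} [Field K] [IsAlgClosed K] (t : ℕ)
    (e : ℕ → K) (he : e 0 = 1) :
    ∃ z : Fin t → K, ∀ n ≤ t, (univ.val.map z).esymm n = e n := by
  -- `q = ∑ (-1) ^ n * e n * X ^ (t - n)`, whose roots have `e` as elementary symmetric functions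
  set q : Polynomial K := ∑ i ∈ range (t + 1), Polynomial.C ((-1) ^ (t - i) * e (t - i)) *
    Polynomial.X ^ i
  have hcoeff : ∀ j ≤ t, q.coeff j = (-1) ^ (t - j) * e (t - j) := fun j hj => by
    simp only [q, Polynomial.finsetSum_coeff, Polynomial.coeff_C_mul_X_pow]
    rw [sum_ite_eq, if_pos (mem_range.mpr (Nat.lt_succ_of_le hj))]
  have hdeg : q.natDegree = t := by
    refine Polynomial.natDegree_eq_of_le_of_coeff_ne_zero ?_ (by simp [hcoeff, he])
    exact Polynomial.natDegree_sum_le_of_forall_le _ _ fun i hi =>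
      (Polynomial.natDegree_C_mul_X_pow_le _ _).trans (Nat.le_of_lt_succ (mem_range.mp hi))
  have hcard : Multiset.card q.roots = q.natDegree :=
    Polynomial.splits_iff_card_roots.mp (IsAlgClosed.splits q)
  obtain ⟨z, hz⟩ := q.roots.exists_fin_map_eq (hcard.trans hdeg)
  refine ⟨z, fun n hn => ?_⟩
  have hvieta := Polynomial.coeff_eq_esymm_roots_of_card hcard (k := t - n) (by omega)
  rw [Polynomial.leadingCoeff, hdeg, hcoeff t le_rfl, hcoeff (t - n) (by omega),
    Nat.sub_sub_self hn, Nat.sub_self, he] at hvieta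
  rw [hz]
  simpa using hvieta.symm

theorem IsAlgClosed.exists_sum_pow_succ_eq {K : Type*} [Field K] [CharZero K] [IsAlgClosed K]
    (t : ℕ) (w : Fin t → K) :
    ∃ z : Fin t → K, ∀ j : Fin t, ∑ m, z m ^ ((j : ℕ) + 1) = w j := by
  set p : ℕ → K := fun n => if h : n - 1 < t then w ⟨n - 1, h⟩ else 0
  obtain ⟨z, hz⟩ := IsAlgClosed.exists_esymm_eq t (newtonESymm p) (newtonESymm_zero p)
  have hesymm : ∀ n ≤ t, eval z (esymm (Fin t) K n) = newtonESymm p n := fun n hn => by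
    rw [← aeval_eq_eval, aeval_esymm_eq_multiset_esymm, hz n hn]
  have hpsum : ∀ n, 0 < n → n ≤ t → eval z (psum (Fin t) K n) = p n := by
    refine eq_of_newton_relation (e := fun n => eval z (esymm (Fin t) K n)) (by simp)
      (fun n _ _ => natCast_mul_eval_esymm z n) fun n _ hnt => ?_
    rw [newtonSum_congr_left p fun i hi => hesymm i (by omega), hesymm n hnt]
    exact natCast_mul_newtonESymm p n
  refine ⟨z, fun j => ?_⟩
  simpa [psum, p] using hpsum (j + 1) j.succ_pos j.isLt

namespace MvPolynomial

variable {R S σ τ : Type*} [CommSemiring R]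

theorem pderiv_aeval [Fintype σ] (Φ : σ → MvPolynomial τ R) (f : MvPolynomial σ R) (u : τ) :
    pderiv u (aeval Φ f) = ∑ v, aeval Φ (pderiv v f) * pderiv u (Φ v) := by
  classical
  induction f using MvPolynomial.induction_on with
  | C a => simp
  | add p q hp hq => simp only [map_add, hp, hq, add_mul, sum_add_distrib]
  | mul_X p v hp =>
    simp only [map_mul, aeval_X, Derivation.leibniz, pderiv_X, hp, smul_eq_mul, map_add,
      add_mul, sum_add_distrib]
    congr 1
    · simp [Pi.single_apply]
    · simp only [mul_sum, mul_assoc]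

theorem jacobian_aeval_eq_mul [CommSemiring S] [Algebra R S] [Fintype σ] {ι : Type*}
    (f : ι → MvPolynomial σ R) (Φ : σ → MvPolynomial τ R) (z : τ → S) :
    Matrix.of (fun a u => aeval z (pderiv u (aeval Φ (f a)))) =
      Matrix.of (fun a v => aeval (fun v => aeval z (Φ v)) (pderiv v (f a))) *
        Matrix.of (fun v u => aeval z (pderiv u (Φ v))) := by
  ext a u
  simp only [Matrix.of_apply, Matrix.mul_apply, pderiv_aeval, map_sum, map_mul, comp_aeval_apply]

end MvPolynomial

theorem newton_representation_preserves_conditionA_general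
    (k s : ℕ) (t : Fin k → ℕ)
    (g h : Fin s → MvPolynomial ((i : Fin k) × Fin (t i)) ℚ)
    (hrep : ∀ a, aeval (fun p : (i : Fin k) × Fin (t i) =>
        ∑ m : Fin (t p.1),
          X (⟨p.1, m⟩ : (i : Fin k) × Fin (t i)) ^ ((p.2 : ℕ) + 1)) (h a) = g a)
    (hA : ∀ w : ((i : Fin k) × Fin (t i)) → ℂ, (∀ a, aeval w (g a) = 0) →
      (Matrix.of fun (a : Fin s) (v : (i : Fin k) × Fin (t i)) =>
        aeval w (pderiv v (g a))).rank = s) :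
    ∀ w : ((i : Fin k) × Fin (t i)) → ℂ, (∀ a, aeval w (h a) = 0) →
      (Matrix.of fun (a : Fin s) (v : (i : Fin k) × Fin (t i)) =>
        aeval w (pderiv v (h a))).rank = s := by
  intro w hw
  choose z hz using fun i => IsAlgClosed.exists_sum_pow_succ_eq (t i) fun j => w ⟨i, j⟩
  set Φ : (i : Fin k) × Fin (t i) → MvPolynomial ((i : Fin k) × Fin (t i)) ℚ := fun p =>
    ∑ m : Fin (t p.1), X (⟨p.1, m⟩ : (i : Fin k) × Fin (t i)) ^ ((p.2 : ℕ) + 1)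
  have hΦ : (fun p => aeval (fun q => z q.1 q.2) (Φ p)) = w := by
    ext ⟨i, j⟩
    simpa [Φ] using hz i j
  have hg : ∀ a, aeval (fun q => z q.1 q.2) (g a) = 0 := fun a => by
    rw [← hrep, comp_aeval_apply, hΦ, hw]
  have hrank := hA _ hg
  simp only [← hrep] at hrank
  rw [jacobian_aeval_eq_mul, hΦ] at hrank
  exact le_antisymm ((Matrix.rank_le_card_height _).trans_eq (Fintype.card_fin s))
    (hrank.symm.trans_le (Matrix.rank_mul_le_left _ _))

/-- if the `S_{t_1} × ⋯ × S_{t_k}`-invariant system `g = (g_1,…,g_s)`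
satisfies condition (A) (Jacobian of rank `s` at every complex zero), and `h_i` are the
unique polynomials with `g_i = h_i(P_{1,1},…,P_{t_k,k})` (Newton power sums of the
blocks), then `(h_1,…,h_s)` also satisfies condition (A). -/
theorem newton_representation_preserves_conditionA
    (k s : ℕ) (t : Fin k → ℕ) (ht : ∀ i, 0 < t i)
    (g h : Fin s → MvPolynomial ((i : Fin k) × Fin (t i)) ℚ)
    (hinv : ∀ a, ∀ σ : (i : Fin k) → Equiv.Perm (Fin (t i)),
      rename (fun p : (i : Fin k) × Fin (t i) =>
        (⟨p.1, σ p.1 p.2⟩ : (i : Fin k) × Fin (t i))) (g a) = g a)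
    (hrep : ∀ a, aeval (fun p : (i : Fin k) × Fin (t i) =>
        ∑ m : Fin (t p.1),
          X (⟨p.1, m⟩ : (i : Fin k) × Fin (t i)) ^ ((p.2 : ℕ) + 1)) (h a) = g a)
    (hA : ∀ w : ((i : Fin k) × Fin (t i)) → ℂ, (∀ a, aeval w (g a) = 0) →
      (Matrix.of fun (a : Fin s) (v : (i : Fin k) × Fin (t i)) =>
        aeval w (pderiv v (g a))).rank = s) :
    ∀ w : ((i : Fin k) × Fin (t i)) → ℂ, (∀ a, aeval w (h a) = 0) →
      (Matrix.of fun (a : Fin s) (v : (i : Fin k) × Fin (t i)) =>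
        aeval w (pderiv v (h a))).rank = s :=
  newton_representation_preserves_conditionA_general k s t g h hrep hA
end

section
/- Let z_1, …, z_k be blocks of t_1, …, t_k real variables respectively, and for each block let P_{j,i}(z_i) = z_{1,i}^j + ⋯ + z_{t_i,i}^j. Then for any positive integers m_1, …, m_k and any rational coefficients λ_{j,i}, the polynomial function ℝ^{t_1+⋯+t_k} → ℝ given by Σ_{i=1}^k P_{2m_i,i} + Σ_{i=1}^k Σ_{j=0}^{2m_i−1} λ_{j,i} P_{j,i} is proper, i.e. the preimage of every compact subset of ℝ is compact. -/
/-!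
Write the map as `w ↦ ∑_σ p_σ(w_σ)`, one monic polynomial of even positive degree per coordinate.
Each `p_σ` tends to `+∞` at both ends of `ℝ` and is therefore bounded below, so the sum tends to
`+∞` along the cocompact filter of the product; a continuous real function with this property is
proper, since `atTop ≤ cocompact ℝ`.
-/

open Filter Polynomial

theorem Polynomial.Monic.tendsto_eval_cocompact_atTop {p : ℝ[X]} (hp : p.Monic)
    (heven : Even p.natDegree) (hpos : 0 < p.natDegree) :
    Tendsto p.eval (cocompact ℝ) atTop := by
  have hdeg : 0 < p.degree := natDegree_pos_iff_degree_pos.mp hpos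
  set q := p.comp (-X)
  have hq : q.Monic := by
    simpa [heven.neg_one_pow] using hp.neg_one_pow_natDegree_mul_comp_neg_X
  have hqdeg : 0 < q.degree := by
    rw [← natDegree_pos_iff_degree_pos, natDegree_comp]
    simpa using hpos
  have hbot : Tendsto p.eval atBot atTop := by
    refine ((q.tendsto_atTop_of_leadingCoeff_nonneg hqdeg (by simp [hq.leadingCoeff])).comp
      tendsto_neg_atBot_atTop).congr fun x => ?_
    simp [q, eval_comp]
  rw [cocompact_eq_atBot_atTop, tendsto_sup]
  exact ⟨hbot, p.tendsto_atTop_of_leadingCoeff_nonneg hdeg (by simp [hp.leadingCoeff])⟩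

theorem Polynomial.monic_X_pow_add_sum_range {R : Type*} [Semiring R] [Nontrivial R]
    (n : ℕ) (c : ℕ → R) :
    (X ^ n + ∑ j ∈ Finset.range n, C (c j) * X ^ j).Monic ∧
      (X ^ n + ∑ j ∈ Finset.range n, C (c j) * X ^ j).natDegree = n := by
  have hlt : (∑ j ∈ Finset.range n, C (c j) * X ^ j).degree < (n : WithBot ℕ) := by
    simp_rw [← Fin.sum_univ_eq_sum_range, degree_sum_fin_lt]
  refine ⟨monic_X_pow_add hlt, ?_⟩
  rw [natDegree_add_eq_left_of_degree_lt (by rwa [degree_X_pow]), natDegree_X_pow]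

theorem tendsto_sum_pi_cocompact_atTop {ι : Type*} [Fintype ι] {X : ι → Type*}
    [∀ i, TopologicalSpace (X i)] {G : Type*} [AddCommGroup G] [PartialOrder G]
    [IsOrderedAddMonoid G] {g : ∀ i, X i → G}
    (htend : ∀ i, Tendsto (g i) (cocompact (X i)) atTop) (hbdd : ∀ i, BddBelow (Set.range (g i))) :
    Tendsto (fun x : ∀ i, X i => ∑ i, g i (x i)) (cocompact (∀ i, X i)) atTop := by
  classical
  choose L hL using hbdd
  rw [← coprodᵢ_cocompact, Filter.coprodᵢ, tendsto_iSup]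
  intro i
  have hrest (x : ∀ i, X i) :
      ∑ j ∈ Finset.univ.erase i, L j ≤ ∑ j ∈ Finset.univ.erase i, g j (x j) :=
    Finset.sum_le_sum fun j _ => hL j ⟨x j, rfl⟩
  refine (tendsto_atTop_add_right_of_le _ _ ((htend i).comp tendsto_comap) hrest).congr fun x => ?_
  exact Finset.add_sum_erase _ (fun j => g j (x j)) (Finset.mem_univ i)

/-- for blocks `z_1,…,z_k` of `t_1,…,t_k` real variables, the map
`Σ_i P_{2m_i,i} + Σ_i Σ_{j=0}^{2m_i−1} λ_{j,i} P_{j,i}` is proper, where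
`P_{j,i}(w) = Σ_m w_{m,i}^j` is the `j`-th Newton power sum of block `i`. -/
theorem blockwise_newton_sum_map_is_proper
    (k : ℕ) (t : Fin k → ℕ) (m : Fin k → ℕ) (hm : ∀ i, 0 < m i)
    (lam : Fin k → ℕ → ℚ) :
    ∀ K : Set ℝ, IsCompact K →
      IsCompact ((fun w : ((i : Fin k) × Fin (t i)) → ℝ =>
        (∑ i : Fin k, ∑ j : Fin (t i), w ⟨i, j⟩ ^ (2 * m i)) +
          ∑ i : Fin k, ∑ jj ∈ Finset.range (2 * m i),
            (lam i jj : ℝ) * ∑ j : Fin (t i), w ⟨i, j⟩ ^ jj) ⁻¹' K) := by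
  intro K hK
  let p : Fin k → ℝ[X] := fun i =>
    X ^ (2 * m i) + ∑ jj ∈ Finset.range (2 * m i), C (lam i jj : ℝ) * X ^ jj
  have hmap : (fun w : ((i : Fin k) × Fin (t i)) → ℝ =>
      (∑ i : Fin k, ∑ j : Fin (t i), w ⟨i, j⟩ ^ (2 * m i)) +
        ∑ i : Fin k, ∑ jj ∈ Finset.range (2 * m i),
          (lam i jj : ℝ) * ∑ j : Fin (t i), w ⟨i, j⟩ ^ jj) =
      fun w => ∑ σ, (p σ.1).eval (w σ) := by
    funext w
    simp only [Fintype.sum_sigma, p, eval_add, eval_pow, eval_X, eval_finsetSum, eval_mul,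
      eval_C, Finset.sum_add_distrib, Finset.mul_sum]
    congr 1
    exact Finset.sum_congr rfl fun i _ => Finset.sum_comm
  have htend (i : Fin k) : Tendsto (p i).eval (cocompact ℝ) atTop := by
    obtain ⟨hmonic, hdeg⟩ := monic_X_pow_add_sum_range (2 * m i) fun jj => (lam i jj : ℝ)
    exact hmonic.tendsto_eval_cocompact_atTop (by simp [hdeg]) (by simp [hdeg, hm i])
  have hbdd (i : Fin k) : BddBelow (Set.range (p i).eval) :=
    let ⟨x₀, hx₀⟩ := (p i).continuous.exists_forall_le (htend i)
    ⟨_, Set.forall_mem_range.mpr hx₀⟩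
  have hcoercive := tendsto_sum_pi_cocompact_atTop
    (g := fun σ : (i : Fin k) × Fin (t i) => (p σ.1).eval) (fun σ => htend σ.1) fun σ => hbdd σ.1
  have hproper : IsProperMap fun w : ((i : Fin k) × Fin (t i)) → ℝ => ∑ σ, (p σ.1).eval (w σ) :=
    isProperMap_iff_tendsto_cocompact.mpr ⟨by fun_prop, hcoercive.mono_right atTop_le_cocompact⟩
  rw [hmap]
  exact hproper.isCompact_preimage hK
end

section
/- Let f = (f_1, …, f_s) be symmetric polynomials in ℚ[x_1, …, x_n] with s ≤ n, and assume the Jacobian matrix of f has rank s at every point of V(f) ⊂ ℂ^n. Then every point w = (w_1, …, w_n) ∈ V(f) has at least s pairwise distinct coordinate values, i.e. the cardinality of the set {w_1, …, w_n} is at least s. -/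
open MvPolynomial

/-- if `f = (f_1,…,f_s)` are symmetric polynomials in `n ≥ s` variables
whose Jacobian has rank `s` at every point of `V(f) ⊂ ℂ^n`, then every point of `V(f)`
has at least `s` pairwise distinct coordinate values. -/
theorem zeros_have_at_least_s_distinct_coordinates
    (n s : ℕ) (hs : s ≤ n) (f : Fin s → MvPolynomial (Fin n) ℚ)
    (hsym : ∀ a, ∀ σ : Equiv.Perm (Fin n), rename σ (f a) = f a)
    (hA : ∀ w : Fin n → ℂ, (∀ a, aeval w (f a) = 0) →
      (Matrix.of fun (a : Fin s) (m : Fin n) => aeval w (pderiv m (f a))).rank = s) :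
    ∀ w : Fin n → ℂ, (∀ a, aeval w (f a) = 0) →
      s ≤ (Finset.univ.image w).card := by
  classical
  intro w hw
  have hrank := hA w hw
  set M : Matrix (Fin s) (Fin n) ℂ :=
    Matrix.of fun (a : Fin s) (m : Fin n) => aeval w (pderiv m (f a)) with hM
  -- equal coordinates give equal columns
  have hcol : ∀ (a : Fin s) (m m' : Fin n), w m = w m' → M a m = M a m' := by
    intro a m m' hww
    have hinj : Function.Injective (Equiv.swap m m' : Fin n → Fin n) :=
      (Equiv.swap m m').injective
    have h1 : pderiv ((Equiv.swap m m') m) (rename (Equiv.swap m m') (f a))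
        = rename (Equiv.swap m m') (pderiv m (f a)) := pderiv_rename hinj m (f a)
    rw [hsym a (Equiv.swap m m'), Equiv.swap_apply_left] at h1
    have hcomp : w ∘ (Equiv.swap m m') = w := by
      funext i
      rcases eq_or_ne i m with rfl | him
      · simp [hww]
      · rcases eq_or_ne i m' with rfl | him'
        · simp [hww]
        · simp [Function.comp, Equiv.swap_apply_of_ne_of_ne him him']
    show aeval w (pderiv m (f a)) = aeval w (pderiv m' (f a))
    rw [h1, aeval_rename, hcomp]
  set t : Finset ℂ := Finset.univ.image w with ht
  -- section picking a preimage for each value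
  have hsec : ∀ v : t, ∃ m : Fin n, w m = v := by
    intro v
    obtain ⟨m, -, hm⟩ := Finset.mem_image.mp v.2
    exact ⟨m, hm⟩
  choose r hr using hsec
  have hcard : Fintype.card t = t.card := Fintype.card_coe t
  set B : Matrix (Fin s) t ℂ := Matrix.of fun a v => M a (r v) with hB
  have hMB : ∀ (a : Fin s) (m : Fin n),
      M a m = B a ⟨w m, Finset.mem_image_of_mem w (Finset.mem_univ m)⟩ := by
    intro a m
    exact hcol a m (r ⟨w m, Finset.mem_image_of_mem w (Finset.mem_univ m)⟩)
      (hr ⟨w m, Finset.mem_image_of_mem w (Finset.mem_univ m)⟩).symm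
  -- column span of M is inside column span of B
  have hspan : Set.range M.transpose ⊆ Set.range B.transpose := by
    rintro _ ⟨m, rfl⟩
    refine ⟨⟨w m, Finset.mem_image_of_mem w (Finset.mem_univ m)⟩, ?_⟩
    funext a
    exact (hMB a m).symm
  have hle : M.rank ≤ B.rank := by
    rw [Matrix.rank_eq_finrank_span_cols, Matrix.rank_eq_finrank_span_cols]
    exact Submodule.finrank_mono (Submodule.span_mono hspan)
  have hBle : B.rank ≤ t.card := by
    calc B.rank ≤ Fintype.card t := B.rank_le_card_width
    _ = t.card := hcard
  calc s = M.rank := hrank.symm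
  _ ≤ B.rank := hle
  _ ≤ t.card := hBle
end
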